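/- arXiv:2011.03762 — 7 statements merged into one kernel-verified Lean document; each statement's English description precedes it below -/
import Mathlib

section
/- For every real number r > 0 and every real ν ≥ (2/r)^{1/r}, the tail integral of exp(−z^r) satisfies ∫_ν^∞ exp(−z^r) dz ≤ (2/r) · ν^{1−r} · exp(−ν^r). -/
open MeasureTheory

lemma tail_aux_deriv (r : ℝ) (hr : 0 < r) {z : ℝ} (hz : 0 < z) :
    HasDerivAt (fun z : ℝ => -(2 / r * z ^ (1 - r) * Real.exp (-(z ^ r))))
      (2 * Real.exp (-(z ^ r)) - 2 / r * (1 - r) * z ^ (-r) * Real.exp (-(z ^ r))) z := by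
  have h1 : HasDerivAt (fun z : ℝ => z ^ (1 - r)) ((1 - r) * z ^ (1 - r - 1)) z :=
    Real.hasDerivAt_rpow_const (Or.inl hz.ne')
  have h2 : HasDerivAt (fun z : ℝ => Real.exp (-(z ^ r)))
      (Real.exp (-(z ^ r)) * (-(r * z ^ (r - 1)))) z :=
    (Real.hasDerivAt_rpow_const (Or.inl hz.ne')).neg.exp
  have h3 := ((h1.mul h2).const_mul (2 / r)).neg
  have e1 : z ^ (1 - r - 1) = z ^ (-r) := by norm_num
  have e2 : z ^ (1 - r) * z ^ (r - 1) = 1 := by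
    rw [← Real.rpow_add hz]; norm_num
  have hfun : (fun z : ℝ => -(2 / r * z ^ (1 - r) * Real.exp (-(z ^ r))))
      = fun x : ℝ => -(2 / r * (x ^ (1 - r) * Real.exp (-(x ^ r)))) := by
    funext x; ring
  rw [hfun]
  have e3 : z ^ (1 - r) * (Real.exp (-(z ^ r)) * -(r * z ^ (r - 1)))
      = -(r * Real.exp (-(z ^ r))) := by
    rw [show z ^ (1 - r) * (Real.exp (-(z ^ r)) * -(r * z ^ (r - 1)))
        = z ^ (1 - r) * z ^ (r - 1) * (Real.exp (-(z ^ r)) * -r) by ring, e2]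
    ring
  have hval : 2 * Real.exp (-(z ^ r)) - 2 / r * (1 - r) * z ^ (-r) * Real.exp (-(z ^ r))
      = -(2 / r * ((1 - r) * z ^ (1 - r - 1) * Real.exp (-(z ^ r))
          + z ^ (1 - r) * (Real.exp (-(z ^ r)) * -(r * z ^ (r - 1))))) := by
    rw [e1, e3]
    field_simp
    ring
  rw [hval]
  exact h3

/-- Tail estimate for `∫_ν^∞ exp(-z^r) dz`: for `r > 0` and `ν ≥ (2/r)^(1/r)`,
the tail integral is at most `(2/r) ν^(1-r) exp(-ν^r)`. -/
theorem tail_integral_exp_rpow_le (r ν : ℝ) (hr : 0 < r) (hν : (2 / r) ^ (1 / r) ≤ ν) :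
    ∫ z in Set.Ici ν, Real.exp (-(z ^ r)) ≤ 2 / r * ν ^ (1 - r) * Real.exp (-(ν ^ r)) := by
  have h2r : (0:ℝ) < 2 / r := by positivity
  have hν0 : 0 < ν := lt_of_lt_of_le (Real.rpow_pos_of_pos h2r _) hν
  have hνr : 2 / r ≤ ν ^ r := by
    calc 2 / r = ((2 / r) ^ (1 / r)) ^ r := by
          rw [← Real.rpow_mul h2r.le, one_div_mul_cancel hr.ne', Real.rpow_one]
      _ ≤ ν ^ r := Real.rpow_le_rpow (Real.rpow_pos_of_pos h2r _).le hν hr.le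
  set g : ℝ → ℝ := fun z => -(2 / r * z ^ (1 - r) * Real.exp (-(z ^ r))) with hg
  set g' : ℝ → ℝ := fun z =>
    2 * Real.exp (-(z ^ r)) - 2 / r * (1 - r) * z ^ (-r) * Real.exp (-(z ^ r)) with hg'
  have hderiv : ∀ z ∈ Set.Ici ν, HasDerivAt g (g' z) z := fun z hz =>
    tail_aux_deriv r hr (lt_of_lt_of_le hν0 hz)
  have hkey : ∀ z, ν ≤ z → Real.exp (-(z ^ r)) ≤ g' z := by
    intro z hz
    have hz0 : 0 < z := lt_of_lt_of_le hν0 hz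
    have hzr : 2 / r ≤ z ^ r := hνr.trans (Real.rpow_le_rpow hν0.le hz hr.le)
    have hzrpos : 0 < z ^ r := Real.rpow_pos_of_pos hz0 _
    have hnegr : z ^ (-r) = (z ^ r)⁻¹ := Real.rpow_neg hz0.le r
    have hb : 2 / r * (1 - r) * z ^ (-r) ≤ 1 := by
      rw [hnegr]
      rcases le_or_gt (1 - r) 0 with h | h
      · have : 2 / r * (1 - r) * (z ^ r)⁻¹ ≤ 0 :=
          mul_nonpos_of_nonpos_of_nonneg
            (mul_nonpos_of_nonneg_of_nonpos h2r.le h) (by positivity)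
        linarith
      · have h1 : 2 / r * (1 - r) ≤ 2 / r := by nlinarith
        have h2 : 2 / r * (1 - r) ≤ z ^ r := h1.trans hzr
        calc 2 / r * (1 - r) * (z ^ r)⁻¹ ≤ z ^ r * (z ^ r)⁻¹ :=
              mul_le_mul_of_nonneg_right h2 (by positivity)
          _ = 1 := mul_inv_cancel₀ hzrpos.ne'
    have hexp : 0 < Real.exp (-(z ^ r)) := Real.exp_pos _
    have hmul : 2 / r * (1 - r) * z ^ (-r) * Real.exp (-(z ^ r))
        ≤ 1 * Real.exp (-(z ^ r)) := mul_le_mul_of_nonneg_right hb hexp.le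
    simp only [hg']
    nlinarith
  have hg'pos : ∀ z ∈ Set.Ioi ν, 0 ≤ g' z := fun z hz =>
    le_trans (Real.exp_pos _).le (hkey z (le_of_lt hz))
  have htend : Filter.Tendsto g Filter.atTop (nhds 0) := by
    have h0 : Filter.Tendsto (fun x : ℝ => x ^ ((1 - r) / r) * Real.exp (-1 * x))
        Filter.atTop (nhds 0) :=
      tendsto_rpow_mul_exp_neg_mul_atTop_nhds_zero _ 1 one_pos
    have h1 : Filter.Tendsto (fun z : ℝ => z ^ r) Filter.atTop Filter.atTop :=
      tendsto_rpow_atTop hr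
    have h2 := ((h0.comp h1).const_mul (2 / r)).neg
    rw [mul_zero, neg_zero] at h2
    apply Filter.Tendsto.congr' _ h2
    filter_upwards [Filter.eventually_gt_atTop 0] with z hz0
    simp only [Function.comp, hg]
    rw [← Real.rpow_mul hz0.le]
    have : r * ((1 - r) / r) = 1 - r := by field_simp
    rw [this]
    ring_nf
  have hint : IntegrableOn g' (Set.Ioi ν) :=
    integrableOn_Ioi_deriv_of_nonneg' hderiv hg'pos htend
  have heq : ∫ z in Set.Ioi ν, g' z = 0 - g ν :=
    integral_Ioi_of_hasDerivAt_of_nonneg' hderiv hg'pos htend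
  have hmeas : Measurable (fun z : ℝ => Real.exp (-(z ^ r))) :=
    Real.measurable_exp.comp ((measurable_id.pow_const r).neg)
  have hexpint : IntegrableOn (fun z : ℝ => Real.exp (-(z ^ r))) (Set.Ioi ν) := by
    refine Integrable.mono hint hmeas.aestronglyMeasurable ?_
    rw [ae_restrict_iff' measurableSet_Ioi]
    filter_upwards with z hz
    have h1 := hkey z hz.le
    have h2 := (Real.exp_pos (-(z ^ r))).le
    rw [Real.norm_eq_abs, Real.norm_eq_abs, abs_of_nonneg h2, abs_of_nonneg (h2.trans h1)]
    exact h1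
  calc ∫ z in Set.Ici ν, Real.exp (-(z ^ r))
      = ∫ z in Set.Ioi ν, Real.exp (-(z ^ r)) := integral_Ici_eq_integral_Ioi
    _ ≤ ∫ z in Set.Ioi ν, g' z :=
        setIntegral_mono_on hexpint hint measurableSet_Ioi fun z hz => hkey z hz.le
    _ = 0 - g ν := heq
    _ = 2 / r * ν ^ (1 - r) * Real.exp (-(ν ^ r)) := by simp [hg]
end

section
/- For all real numbers a, b, c, p > 0, one has ∫_0^∞ exp(−a z^p / (b + c z^{p/2})) dz ≤ C_p · max((b/a)^{1/p}, (c/a)^{2/p}), where C_p = 2 ∫_0^∞ exp(−(1/2) · (min(√z, z))^p) dz (a finite constant depending only on p). -/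
/-!
Substitute `z = M u` with `M = max ((b/a)^(1/p)) ((c/a)^(2/p))`, so that `b ≤ a M^p` and
`c ≤ a M^(p/2)`. Bounding `b + c z^(p/2)` by twice the larger of its two terms then shows that the
exponent of the rescaled integrand is at least `(1/2) min (u^(p/2), u^p) = (1/2) (min √u u)^p`,
and integrating this pointwise bound gives the estimate, even with `C_p / 2` in place of `C_p`.
-/

open MeasureTheory Real Set

lemma integrableOn_exp_neg_mul_rpow {b q : ℝ} (hb : 0 < b) (hq : 0 < q) :
    IntegrableOn (fun x : ℝ => exp (-b * x ^ q)) (Ioi 0) := by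
  simpa only [rpow_zero, one_mul] using
    integrableOn_rpow_mul_exp_neg_mul_rpow (s := 0) neg_one_lt_zero hq hb

lemma exp_neg_mul_min_le_add (k x y : ℝ) :
    exp (-k * min x y) ≤ exp (-k * x) + exp (-k * y) := by
  rcases min_cases x y with ⟨h, -⟩ | ⟨h, -⟩ <;> rw [h]
  · linarith [exp_pos (-k * y)]
  · linarith [exp_pos (-k * x)]

lemma rpow_eq_rpow_half_sq {v : ℝ} (hv : 0 ≤ v) (p : ℝ) : v ^ p = (v ^ (p / 2)) ^ 2 := by
  rw [← rpow_natCast, ← rpow_mul hv]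
  norm_num

lemma min_sqrt_rpow {u : ℝ} (hu : 0 ≤ u) {p : ℝ} (hp : 0 ≤ p) :
    min (√u) u ^ p = min (u ^ (p / 2)) (u ^ p) := by
  have hsqrt : √u ^ p = u ^ (p / 2) := by
    rw [sqrt_eq_rpow, ← rpow_mul hu, one_div_mul_eq_div]
  rw [← hsqrt]
  rcases min_cases (√u) u with ⟨h, hle⟩ | ⟨h, hlt⟩
  · rw [h, min_eq_left (rpow_le_rpow (sqrt_nonneg u) hle hp)]
  · rw [h, min_eq_right (rpow_le_rpow hu hlt.le hp)]

lemma integrableOn_exp_neg_half_min_sqrt_rpow {p : ℝ} (hp : 0 < p) :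
    IntegrableOn (fun u : ℝ => exp (-(1 / 2) * min (√u) u ^ p)) (Ioi 0) := by
  refine ((integrableOn_exp_neg_mul_rpow one_half_pos (half_pos hp)).add
    (integrableOn_exp_neg_mul_rpow one_half_pos hp)).mono' (by fun_prop (disch := exact hp.le)) ?_
  filter_upwards [ae_restrict_mem measurableSet_Ioi] with u hu
  rw [norm_of_nonneg (exp_pos _).le, min_sqrt_rpow (le_of_lt hu) hp.le]
  exact exp_neg_mul_min_le_add _ _ _

lemma le_mul_rpow_of_div_rpow_one_div_le {a x q M : ℝ} (ha : 0 < a) (hx : 0 ≤ x) (hq : 0 < q)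
    (h : (x / a) ^ (1 / q) ≤ M) : x ≤ a * M ^ q := by
  have hM : 0 ≤ M := (rpow_nonneg (div_nonneg hx ha.le) _).trans h
  rwa [one_div, rpow_inv_le_iff_of_pos (div_nonneg hx ha.le) hM hq, div_le_iff₀' ha] at h

lemma half_min_le_div_add {a b c K x : ℝ} (hb : 0 < b) (hc : 0 < c) (hK : 0 ≤ K) (hx : 0 ≤ x)
    (hbK : b ≤ a * K ^ 2) (hcK : c ≤ a * K) :
    min x (x ^ 2) / 2 ≤ a * (K * x) ^ 2 / (b + c * (K * x)) := by
  rw [le_div_iff₀ (by positivity)]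
  have hmin_le_x := min_le_left x (x ^ 2)
  have hmin_le_sq := min_le_right x (x ^ 2)
  have hmin_nonneg : 0 ≤ min x (x ^ 2) := le_min hx (sq_nonneg x)
  -- the denominator is at most `2 c K x` or `2 b`, whichever is larger
  rcases le_total b (c * (K * x)) with hden | hden
  · nlinarith [mul_le_mul_of_nonneg_right hcK (by positivity : 0 ≤ K * x ^ 2),
      mul_le_mul_of_nonneg_left hden hmin_nonneg, mul_le_mul_of_nonneg_right hmin_le_x
        (by positivity : 0 ≤ c * (K * x))]
  · nlinarith [mul_le_mul_of_nonneg_right hbK (sq_nonneg x),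
      mul_le_mul_of_nonneg_left hden hmin_nonneg, mul_le_mul_of_nonneg_right hmin_le_sq hb.le]

lemma exp_neg_div_le_exp_neg_half_min_sqrt_rpow {a b c p M u : ℝ} (hb : 0 < b) (hc : 0 < c)
    (hp : 0 < p) (hM : 0 < M) (hu : 0 < u) (hbM : b ≤ a * M ^ p) (hcM : c ≤ a * M ^ (p / 2)) :
    exp (-(a * (M * u) ^ p) / (b + c * (M * u) ^ (p / 2))) ≤
      exp (-(1 / 2) * min (√u) u ^ p) := by
  have hsq : (M * u) ^ p = (M ^ (p / 2) * u ^ (p / 2)) ^ 2 := by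
    rw [rpow_eq_rpow_half_sq (by positivity), mul_rpow hM.le hu.le]
  rw [exp_le_exp, neg_div, neg_mul, neg_le_neg_iff, hsq, mul_rpow hM.le hu.le,
    min_sqrt_rpow hu.le hp.le, rpow_eq_rpow_half_sq hu.le p, one_div_mul_eq_div]
  refine half_min_le_div_add hb hc (by positivity) (by positivity) ?_ hcM
  rwa [← rpow_eq_rpow_half_sq hM.le]

/-- Integral estimate: for `a, b, c, p > 0`,
`∫_0^∞ exp(-a z^p / (b + c z^(p/2))) dz ≤ C_p max((b/a)^(1/p), (c/a)^(2/p))`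
where `C_p = 2 ∫_0^∞ exp(-(1/2) (min √z z)^p) dz`. -/
theorem integral_exp_ratio_le (a b c p : ℝ) (ha : 0 < a) (hb : 0 < b) (hc : 0 < c)
    (hp : 0 < p) :
    ∫ z in Set.Ioi (0 : ℝ), Real.exp (-(a * z ^ p) / (b + c * z ^ (p / 2))) ≤
      (2 * ∫ z in Set.Ioi (0 : ℝ), Real.exp (-(1 / 2) * (min (Real.sqrt z) z) ^ p)) *
        max ((b / a) ^ (1 / p)) ((c / a) ^ (2 / p)) := by
  set M := max ((b / a) ^ (1 / p)) ((c / a) ^ (2 / p))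
  have hM : 0 < M := lt_max_of_lt_left (by positivity)
  have hbM : b ≤ a * M ^ p := le_mul_rpow_of_div_rpow_one_div_le ha hb.le hp (le_max_left _ _)
  have hcM : c ≤ a * M ^ (p / 2) := le_mul_rpow_of_div_rpow_one_div_le ha hc.le (half_pos hp)
    (by rw [one_div_div]; exact le_max_right _ _)
  have hC : 0 ≤ ∫ z in Ioi (0 : ℝ), exp (-(1 / 2) * min (√z) z ^ p) :=
    setIntegral_nonneg measurableSet_Ioi fun _ _ => (exp_pos _).le
  calc ∫ z in Ioi (0 : ℝ), exp (-(a * z ^ p) / (b + c * z ^ (p / 2)))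
      = M * ∫ u in Ioi (0 : ℝ), exp (-(a * (M * u) ^ p) / (b + c * (M * u) ^ (p / 2))) := by
        rw [integral_comp_mul_left_Ioi (fun z => exp (-(a * z ^ p) / (b + c * z ^ (p / 2)))) 0 hM,
          mul_zero, smul_eq_mul, mul_inv_cancel_left₀ hM.ne']
    _ ≤ M * ∫ u in Ioi (0 : ℝ), exp (-(1 / 2) * min (√u) u ^ p) :=
        mul_le_mul_of_nonneg_left (setIntegral_mono_of_nonneg (fun _ _ => (exp_pos _).le)
          (fun u hu => exp_neg_div_le_exp_neg_half_min_sqrt_rpow hb hc hp hM hu hbM hcM)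
          (integrableOn_exp_neg_half_min_sqrt_rpow hp)) hM.le
    _ ≤ (2 * ∫ z in Ioi (0 : ℝ), exp (-(1 / 2) * min (√z) z ^ p)) * M := by nlinarith
end

section
/- Let H be a finite nonempty set of real numbers, μ̂ : H → ℝ and V : H → ℝ arbitrary functions. For h ∈ H define A_h = max_{h' ∈ H, h' ≤ h} {(μ̂_h − μ̂_{h'})² − V_h − V_{h'}}_+. Let ĥ ∈ H be such that A_{ĥ} + V_{ĥ} ≤ A_h + V_h for every h ∈ H. Then for every h ∈ H and every x ∈ ℝ: (μ̂_{ĥ} − x)² ≤ 4 A_h + 4 V_h + 2 (μ̂_h − x)². -/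
/-- The Goldenshluger–Lepski selection step: if `ĥ` minimizes `A + V` over the finite
bandwidth set `H`, where `A h` is the maximum over `h' ≤ h` of the positive part of
`(μ̂_h - μ̂_{h'})² - V_h - V_{h'}`, then for every `h ∈ H` and every `x ∈ ℝ`,
`(μ̂_ĥ - x)² ≤ 4 A_h + 4 V_h + 2 (μ̂_h - x)²`. -/
theorem goldenshluger_lepski_selection (H : Finset ℝ) (μhat V A : ℝ → ℝ)
    (hA : ∀ h, (hh : h ∈ H) → A h =
      (H.filter fun h' => h' ≤ h).sup'
        ⟨h, Finset.mem_filter.mpr ⟨hh, le_refl h⟩⟩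
        (fun h' => max ((μhat h - μhat h') ^ 2 - V h - V h') 0))
    (hhat : ℝ) (hhatH : hhat ∈ H)
    (hmin : ∀ h ∈ H, A hhat + V hhat ≤ A h + V h) :
    ∀ h ∈ H, ∀ x : ℝ,
      (μhat hhat - x) ^ 2 ≤ 4 * A h + 4 * V h + 2 * (μhat h - x) ^ 2 := by
  -- key: for a ≤ b both in H, (μ̂_b - μ̂_a)² ≤ A b + V b + V a
  have key : ∀ a ∈ H, ∀ b, ∀ hb : b ∈ H, a ≤ b →
      (μhat b - μhat a) ^ 2 ≤ A b + V b + V a := by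
    intro a ha b hb hab
    have hle : max ((μhat b - μhat a) ^ 2 - V b - V a) 0 ≤ A b := by
      rw [hA b hb]
      exact Finset.le_sup' (fun h' => max ((μhat b - μhat h') ^ 2 - V b - V h') 0)
        (show a ∈ H.filter fun h' => h' ≤ b from Finset.mem_filter.mpr ⟨ha, hab⟩)
    have := le_trans (le_max_left _ _) hle
    linarith
  have Anonneg : ∀ b, ∀ hb : b ∈ H, 0 ≤ A b := by
    intro b hb
    rw [hA b hb]
    exact le_trans (le_max_right _ _)
      (Finset.le_sup' (fun h' => max ((μhat b - μhat h') ^ 2 - V b - V h') 0)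
        (show b ∈ H.filter fun h' => h' ≤ b from Finset.mem_filter.mpr ⟨hb, le_refl b⟩))
  intro h hH x
  have sq : (μhat hhat - x) ^ 2 ≤ 2 * (μhat hhat - μhat h) ^ 2 + 2 * (μhat h - x) ^ 2 := by
    nlinarith [sq_nonneg (μhat hhat - 2 * μhat h + x)]
  have hdiff : (μhat hhat - μhat h) ^ 2 ≤ 2 * A h + 2 * V h := by
    rcases le_total hhat h with hc | hc
    · have := key hhat hhatH h hH hc
      have hv : V hhat ≤ A h + V h := by
        have := hmin h hH
        have := Anonneg hhat hhatH
        linarith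
      nlinarith [sq_nonneg (μhat h - μhat hhat)]
    · have := key h hH hhat hhatH hc
      have hv : A hhat + V hhat ≤ A h + V h := hmin h hH
      have := Anonneg h hH
      linarith
  linarith
end

section
/- Let H be a finite nonempty set of real numbers, h ∈ H, and let μ̂ : H → ℝ, m : H → ℝ, V : H → ℝ be functions and x ∈ ℝ. Define B_h = max_{h' ∈ H, h' ≤ h} |m_{h'} − x|. Then max_{h' ∈ H, h' ≤ h} {(μ̂_h − μ̂_{h'})² − V_h − V_{h'}}_+ ≤ 8 B_h² + {4(μ̂_h − m_h)² − V_h}_+ + max_{h' ∈ H, h' ≤ h} {4(μ̂_{h'} − m_{h'})² − V_{h'}}_+. -/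
/-- Step 2 of the Goldenshluger–Lepski argument: the comparison term
`max_{h' ≤ h} {(μ̂_h - μ̂_{h'})² - V_h - V_{h'}}_+` is bounded by `8 B_h²`, where
`B_h = max_{h' ≤ h} |m_{h'} - x|` is the bias term, plus two stochastic deviation
terms. -/
theorem goldenshluger_lepski_bias_bound (H : Finset ℝ) (h : ℝ) (hh : h ∈ H)
    (μhat m V : ℝ → ℝ) (x : ℝ) :
    (H.filter fun h' => h' ≤ h).sup'
        ⟨h, Finset.mem_filter.mpr ⟨hh, le_refl h⟩⟩
        (fun h' => max ((μhat h - μhat h') ^ 2 - V h - V h') 0) ≤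
      8 * ((H.filter fun h' => h' ≤ h).sup'
            ⟨h, Finset.mem_filter.mpr ⟨hh, le_refl h⟩⟩
            (fun h' => |m h' - x|)) ^ 2 +
        max (4 * (μhat h - m h) ^ 2 - V h) 0 +
        (H.filter fun h' => h' ≤ h).sup'
          ⟨h, Finset.mem_filter.mpr ⟨hh, le_refl h⟩⟩
          (fun h' => max (4 * (μhat h' - m h') ^ 2 - V h') 0) := by
  have hne : (H.filter fun h' => h' ≤ h).Nonempty :=
    ⟨h, Finset.mem_filter.mpr ⟨hh, le_refl h⟩⟩
  have hhmem : h ∈ H.filter fun h' => h' ≤ h :=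
    Finset.mem_filter.mpr ⟨hh, le_refl h⟩
  set B := (H.filter fun h' => h' ≤ h).sup' hne (fun h' => |m h' - x|) with hB
  set S := (H.filter fun h' => h' ≤ h).sup' hne
      (fun h' => max (4 * (μhat h' - m h') ^ 2 - V h') 0) with hS
  have hSnonneg : 0 ≤ S := le_trans (le_max_right _ 0) (Finset.le_sup' (fun h' => max (4 * (μhat h' - m h') ^ 2 - V h') 0) hhmem)
  have hAnonneg : (0:ℝ) ≤ max (4 * (μhat h - m h) ^ 2 - V h) 0 := le_max_right _ _
  have hBnonneg : (0:ℝ) ≤ B := le_trans (abs_nonneg _) (Finset.le_sup' (fun h' => |m h' - x|) hhmem)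
  have hBsq : ∀ h' ∈ H.filter fun h'' => h'' ≤ h, (m h' - x) ^ 2 ≤ B ^ 2 := by
    intro h' hm
    have h1 : |m h' - x| ≤ B := Finset.le_sup' (fun h' => |m h' - x|) hm
    calc (m h' - x) ^ 2 = |m h' - x| ^ 2 := (sq_abs _).symm
    _ ≤ B ^ 2 := pow_le_pow_left₀ (abs_nonneg _) h1 2
  apply Finset.sup'_le
  intro h' hm
  apply max_le _ (by positivity)
  have key : (μhat h - μhat h') ^ 2 ≤
      4 * (μhat h - m h) ^ 2 + 4 * (m h - x) ^ 2 + 4 * (m h' - x) ^ 2 +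
        4 * (μhat h' - m h') ^ 2 := by
    nlinarith [sq_nonneg ((μhat h - m h) - (m h - x)),
      sq_nonneg ((μhat h - m h) - (x - m h')),
      sq_nonneg ((μhat h - m h) - (m h' - μhat h')),
      sq_nonneg ((m h - x) - (x - m h')),
      sq_nonneg ((m h - x) - (m h' - μhat h')),
      sq_nonneg ((x - m h') - (m h' - μhat h'))]
  have b1 : (m h - x) ^ 2 ≤ B ^ 2 := hBsq h hhmem
  have b2 : (m h' - x) ^ 2 ≤ B ^ 2 := hBsq h' hm
  have d1 : 4 * (μhat h - m h) ^ 2 - V h ≤ max (4 * (μhat h - m h) ^ 2 - V h) 0 :=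
    le_max_left _ _
  have d2 : 4 * (μhat h' - m h') ^ 2 - V h' ≤ S :=
    le_trans (le_max_left _ 0) (Finset.le_sup' (fun h' => max (4 * (μhat h' - m h') ^ 2 - V h') 0) hm)
  linarith
end

section
/- Let d ≥ 1, T > 0, ρ a finite Borel measure on [0, T], and w : [0, T] → ℝ a bounded measurable function with ∫_{[0,T]} w dρ = 0. Let V', W' : ℝ^d → ℝ^d be measurable with each component of W' Lebesgue-integrable on ℝ^d, and let μ : [0,T] × ℝ^d → [0, ∞) be jointly measurable with ∫_{ℝ^d} μ(t, y) dy = 1 for every t, such that (t, y) ↦ μ(t, y)|w(t)| is ρ ⊗ Lebesgue integrable. Define g(y) = ∫_{[0,T]} μ(t, y) w(t) ρ(dt) (so g ∈ L¹(ℝ^d)), b(t, x) = −V'(x) − ∫_{ℝ^d} W'(x − y) μ(t, y) dy, and Lb(x) = ∫_{[0,T]} b(t, x) w(t) ρ(dt) whenever the integrand is ρ-integrable. Then for Lebesgue-almost every x, Lb(x) is well defined and −Lb agrees almost everywhere with the (componentwise) integrable convolution W' ⋆ g, and consequently, for every ξ ∈ ℝ^d and every component k ∈ {1,…,d}: F(−Lb^k)(ξ)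 = F(W'^k)(ξ) · F(g)(ξ), where F(f)(ξ) = ∫_{ℝ^d} exp(−2πi ξ·x) f(x) dx denotes the Fourier transform. -/
/-
Since `∫ w dρ = 0`, the time average `Lb` loses the confinement term `-V'`, and what remains is
the time average of the convolutions `μ_t ⋆ W'`. Fubini on `[0,T] × ℝ^d × ℝ^d`, justified by
the integrability of `μ |w|` and of `W'`, moves the time average inside, so `-Lb = g ⋆ W'` almost
everywhere, and the convolution theorem for the Fourier transform gives the factorization.
-/

open MeasureTheory
open scoped FourierTransform Convolution

section TimeAveragedConvolution

variable {α G E : Type*} [MeasurableSpace α] [MeasurableSpace G] [AddGroup G] [MeasurableAdd G]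
  [MeasurableSub₂ G] [NormedAddCommGroup E] [NormedSpace ℝ E]
  {ν : Measure α} [SFinite ν] {μ : Measure G} [SFinite μ] [μ.IsAddRightInvariant]
  {k : α × G → ℝ} {W : G → E}

theorem integrable_smul_comp_sub_prod (hk : Integrable k (ν.prod μ)) (hkm : StronglyMeasurable k)
    (hW : Integrable W μ) (hWm : StronglyMeasurable W) :
    Integrable (fun p : G × (α × G) => k p.2 • W (p.1 - p.2.2)) (μ.prod (ν.prod μ)) := by
  have hmeas : StronglyMeasurable (fun p : G × (α × G) => k p.2 • W (p.1 - p.2.2)) :=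
    (hkm.comp_measurable measurable_snd).smul
      (hWm.comp_measurable (measurable_fst.sub (measurable_snd.comp measurable_snd)))
  refine (integrable_prod_iff' hmeas.aestronglyMeasurable).2
    ⟨.of_forall fun q => (hW.comp_sub_right q.2).smul (k q), ?_⟩
  have hnorm : ∀ q : α × G, ∫ x, ‖k q • W (x - q.2)‖ ∂μ = ‖k q‖ * ∫ x, ‖W x‖ ∂μ := fun q => by
    simp only [norm_smul]
    rw [integral_const_mul, integral_sub_right_eq_self (fun x => ‖W x‖) q.2]
  simpa only [hnorm] using hk.norm.mul_const _

variable [CompleteSpace E]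

theorem ae_integral_integral_smul_comp_sub (hk : Integrable k (ν.prod μ))
    (hkm : StronglyMeasurable k) (hW : Integrable W μ) (hWm : StronglyMeasurable W) :
    ∀ᵐ x ∂μ, Integrable (fun t => ∫ y, k (t, y) • W (x - y) ∂μ) ν ∧
      ∫ t, ∫ y, k (t, y) • W (x - y) ∂μ ∂ν = ∫ y, (∫ t, k (t, y) ∂ν) • W (x - y) ∂μ := by
  filter_upwards [(integrable_smul_comp_sub_prod hk hkm hW hWm).prod_right_ae] with x hx
  refine ⟨hx.integral_prod_left, ?_⟩
  rw [integral_integral_swap (f := fun t y => k (t, y) • W (x - y)) hx]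
  simp_rw [integral_smul_const]

end TimeAveragedConvolution

theorem integrable_and_integral_smul_neg_sub_of_integral_eq_zero {α E : Type*}
    [MeasurableSpace α] [NormedAddCommGroup E] [NormedSpace ℝ E] [CompleteSpace E]
    {ν : Measure α} {w : α → ℝ} {u : α → E} (v : E) (hw : Integrable w ν) (hw0 : ∫ t, w t ∂ν = 0)
    (hu : Integrable (fun t => w t • u t) ν) :
    Integrable (fun t => w t • (-v - u t)) ν ∧ ∫ t, w t • (-v - u t) ∂ν = -∫ t, w t • u t ∂ν := by
  have hsplit : (fun t => w t • (-v - u t)) = fun t => -(w t • v) - w t • u t := by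
    funext t; rw [smul_sub, smul_neg]
  have hv : Integrable (fun t => -(w t • v)) ν := (hw.smul_const v).neg
  refine ⟨hsplit ▸ hv.sub hu, ?_⟩
  rw [hsplit, integral_sub hv hu, integral_neg, integral_smul_const, hw0, zero_smul, neg_zero,
    zero_sub]

theorem ofReal_integral_smul_apply_eq_convolution {G ι : Type*} [MeasurableSpace G] [Sub G]
    [Fintype ι] {μ : Measure G} {g : G → ℝ} {W : G → EuclideanSpace ℝ ι} {x : G}
    (hx : Integrable (fun y => g y • W (x - y)) μ) (j : ι) :
    (((∫ y, g y • W (x - y) ∂μ) j : ℝ) : ℂ) =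
      ((fun y => (g y : ℂ)) ⋆[ContinuousLinearMap.mul ℂ ℂ, μ] fun y => (W y j : ℂ)) x := by
  rw [eval_integral_piLp (fun i => hx.eval_piLp i), convolution_def, ← integral_complex_ofReal]
  simp

theorem fourier_identification_vlasov_general (d : ℕ) (T : ℝ)
    (ρ : Measure ℝ) [IsFiniteMeasure ρ]
    (w : ℝ → ℝ) (hw : Measurable w) (M : ℝ) (hwM : ∀ t, |w t| ≤ M)
    (hw0 : ∫ t in Set.Icc (0 : ℝ) T, w t ∂ρ = 0)
    (V' W' : EuclideanSpace ℝ (Fin d) → EuclideanSpace ℝ (Fin d))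
    (hW' : Measurable W')
    (hW'int : ∀ j : Fin d, Integrable (fun x => W' x j) volume)
    (μ : ℝ → EuclideanSpace ℝ (Fin d) → ℝ)
    (hμmeas : Measurable (Function.uncurry μ))
    (hμpos : ∀ t y, 0 ≤ μ t y)
    (hint : Integrable (fun q : ℝ × EuclideanSpace ℝ (Fin d) => μ q.1 q.2 * |w q.1|)
      ((ρ.restrict (Set.Icc (0 : ℝ) T)).prod volume))
    (g : EuclideanSpace ℝ (Fin d) → ℝ)
    (hg : ∀ y, g y = ∫ t in Set.Icc (0 : ℝ) T, μ t y * w t ∂ρ)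
    (b : ℝ → EuclideanSpace ℝ (Fin d) → EuclideanSpace ℝ (Fin d))
    (hb : ∀ t x, b t x = -V' x - ∫ y, μ t y • W' (x - y)) :
    Integrable g volume ∧
    Integrable (fun x => ∫ y, g y • W' (x - y)) volume ∧
    (∀ᵐ x ∂(volume : Measure (EuclideanSpace ℝ (Fin d))),
      Integrable (fun t => w t • b t x) (ρ.restrict (Set.Icc (0 : ℝ) T)) ∧
      -(∫ t in Set.Icc (0 : ℝ) T, w t • b t x ∂ρ) = ∫ y, g y • W' (x - y)) ∧
    (∀ ξ : EuclideanSpace ℝ (Fin d), ∀ j : Fin d,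
      FourierTransform.fourier
          (fun x => (((-(∫ t in Set.Icc (0 : ℝ) T, w t • b t x ∂ρ) :
              EuclideanSpace ℝ (Fin d)) j : ℝ) : ℂ)) ξ =
        FourierTransform.fourier (fun x => ((W' x j : ℝ) : ℂ)) ξ *
          FourierTransform.fourier (fun x => ((g x : ℝ) : ℂ)) ξ) := by
  set ν := ρ.restrict (Set.Icc (0 : ℝ) T)
  set k : ℝ × EuclideanSpace ℝ (Fin d) → ℝ := fun q => μ q.1 q.2 * w q.1
  obtain rfl : g = fun y => ∫ t, k (t, y) ∂ν := funext hg
  have hkm : StronglyMeasurable k := (hμmeas.mul (hw.comp measurable_fst)).stronglyMeasurable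
  have hk : Integrable k (ν.prod volume) :=
    (integrable_norm_iff hkm.aestronglyMeasurable).1 <| hint.congr <| .of_forall fun q => by
      simp [k, abs_of_nonneg (hμpos q.1 q.2)]
  have hwI : Integrable w ν :=
    .of_bound hw.aestronglyMeasurable M (.of_forall fun t => (Real.norm_eq_abs _).trans_le (hwM t))
  have hWI : Integrable W' volume := .of_eval_piLp hW'int
  have hgI : Integrable (fun y => ∫ t, k (t, y) ∂ν) volume := hk.integral_prod_right
  have hdrift : ∀ᵐ x ∂(volume : Measure (EuclideanSpace ℝ (Fin d))),
      Integrable (fun t => w t • b t x) ν ∧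
      -(∫ t, w t • b t x ∂ν) = ∫ y, (∫ t, k (t, y) ∂ν) • W' (x - y) := by
    filter_upwards [ae_integral_integral_smul_comp_sub hk hkm hWI hW'.stronglyMeasurable]
      with x ⟨hxI, hxeq⟩
    have hkW : ∀ t, ∫ y, k (t, y) • W' (x - y) = w t • ∫ y, μ t y • W' (x - y) := fun t => by
      simp_rw [← integral_smul, smul_smul, k, mul_comm]
    obtain ⟨hI, hEq⟩ := integrable_and_integral_smul_neg_sub_of_integral_eq_zero (V' x) hwI hw0
      (hxI.congr (.of_forall hkW))
    simp_rw [hb]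
    exact ⟨hI, by rw [hEq, neg_neg, ← hxeq, integral_congr_ae (.of_forall hkW)]⟩
  refine ⟨hgI, ?_, hdrift, fun ξ j => ?_⟩
  · exact hgI.integrable_convolution (ContinuousLinearMap.lsmul ℝ ℝ) hWI
  have hae : (fun x => (((-(∫ t, w t • b t x ∂ν)) j : ℝ) : ℂ)) =ᵐ[volume]
      ((fun y => ((∫ t, k (t, y) ∂ν : ℝ) : ℂ)) ⋆[ContinuousLinearMap.mul ℂ ℂ]
        fun y => (W' y j : ℂ)) := by
    filter_upwards [hdrift, hgI.ae_convolution_exists (ContinuousLinearMap.lsmul ℝ ℝ) hWI]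
      with x hx hcx
    rw [hx.2, ofReal_integral_smul_apply_eq_convolution hcx]
  rw [Real.fourier_congr_ae hae, mul_comm]
  exact Real.fourier_mul_convolution_eq hgI.ofReal (hW'int j).ofReal ξ

/-- Identification of the interaction kernel in the Vlasov model via the Fourier
transform: with the time-averaged drift `Lb(x) = ∫ b(t,x) w(t) ρ(dt)`, one has, for
Lebesgue-almost every `x`, that `Lb(x)` is well defined and `-Lb` agrees almost
everywhere with the integrable convolution `W' ⋆ g`, where
`g(y) = ∫ μ(t,y) w(t) ρ(dt)`; consequently, componentwise,
`𝓕(-Lb^k)(ξ) = 𝓕(W'^k)(ξ) · 𝓕(g)(ξ)`. -/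
theorem fourier_identification_vlasov (d : ℕ) (hd : 1 ≤ d) (T : ℝ) (hT : 0 < T)
    (ρ : Measure ℝ) [IsFiniteMeasure ρ]
    (w : ℝ → ℝ) (hw : Measurable w) (M : ℝ) (hwM : ∀ t, |w t| ≤ M)
    (hw0 : ∫ t in Set.Icc (0 : ℝ) T, w t ∂ρ = 0)
    (V' W' : EuclideanSpace ℝ (Fin d) → EuclideanSpace ℝ (Fin d))
    (hV' : Measurable V') (hW' : Measurable W')
    (hW'int : ∀ j : Fin d, Integrable (fun x => W' x j) volume)
    (μ : ℝ → EuclideanSpace ℝ (Fin d) → ℝ)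
    (hμmeas : Measurable (Function.uncurry μ))
    (hμpos : ∀ t y, 0 ≤ μ t y)
    (hμprob : ∀ t ∈ Set.Icc (0 : ℝ) T, ∫ y, μ t y = 1)
    (hint : Integrable (fun q : ℝ × EuclideanSpace ℝ (Fin d) => μ q.1 q.2 * |w q.1|)
      ((ρ.restrict (Set.Icc (0 : ℝ) T)).prod volume))
    (g : EuclideanSpace ℝ (Fin d) → ℝ)
    (hg : ∀ y, g y = ∫ t in Set.Icc (0 : ℝ) T, μ t y * w t ∂ρ)
    (b : ℝ → EuclideanSpace ℝ (Fin d) → EuclideanSpace ℝ (Fin d))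
    (hb : ∀ t x, b t x = -V' x - ∫ y, μ t y • W' (x - y)) :
    Integrable g volume ∧
    Integrable (fun x => ∫ y, g y • W' (x - y)) volume ∧
    (∀ᵐ x ∂(volume : Measure (EuclideanSpace ℝ (Fin d))),
      Integrable (fun t => w t • b t x) (ρ.restrict (Set.Icc (0 : ℝ) T)) ∧
      -(∫ t in Set.Icc (0 : ℝ) T, w t • b t x ∂ρ) = ∫ y, g y • W' (x - y)) ∧
    (∀ ξ : EuclideanSpace ℝ (Fin d), ∀ j : Fin d,
      FourierTransform.fourier
          (fun x => (((-(∫ t in Set.Icc (0 : ℝ) T, w t • b t x ∂ρ) :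
              EuclideanSpace ℝ (Fin d)) j : ℝ) : ℂ)) ξ =
        FourierTransform.fourier (fun x => ((W' x j : ℝ) : ℂ)) ξ *
          FourierTransform.fourier (fun x => ((g x : ℝ) : ℂ)) ξ) :=
  fourier_identification_vlasov_general d T ρ w hw M hwM hw0 V' W' hW' hW'int μ hμmeas hμpos hint g
    hg b hb
end

section
/- Let Y be a real random variable on a probability space, let κ, m, v, w > 0 satisfy P(|Y| ≥ u) ≤ κ exp(−m u² / (v + w u)) for every u ≥ 0, and let V ≥ 0. Then E[max(4Y² − V, 0)] ≤ κ [ (8v/m) exp(−m V / (8v)) + (8w/m) (√V + 4w/m) exp(−m √V / (4w)) ]. -/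
open MeasureTheory Real Filter Set Topology

/-!
By the layer-cake formula, `E[{4Y² - V}₊] = ∫₀^∞ P(|Y| ≥ √(V + t) / 2) dt`. Comparing the
denominator `v + w u` of the Bernstein exponent with `2v` or `2wu`, whichever is larger,
splits the tail into `exp (-m u² / (2v)) + exp (-m u / (2w))`. At `u = √(V + t) / 2` these are
`exp (-a (V + t))` and `exp (-b √(V + t))` with `a = m / (8v)`, `b = m / (4w)`, whose
integrals over `t > 0` are elementary: the second has primitive
`-(2/b) (√(V + t) + 1/b) exp (-b √(V + t))`.
-/

theorem Real.exp_neg_sq_div_le_add {m v w u : ℝ} (hm : 0 ≤ m) (hv : 0 < v) (hw : 0 < w)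
    (hu : 0 ≤ u) :
    exp (-(m * u ^ 2) / (v + w * u)) ≤
      exp (-(m * u ^ 2) / (2 * v)) + exp (-(m * u) / (2 * w)) := by
  rcases le_total (w * u) v with hwu | hvu
  · have : -(m * u ^ 2) / (v + w * u) ≤ -(m * u ^ 2) / (2 * v) := by
      rw [neg_div, neg_div, neg_le_neg_iff]
      exact div_le_div_of_nonneg_left (by positivity) (by positivity) (by linarith)
    exact (exp_le_exp.2 this).trans (le_add_of_nonneg_right (exp_pos _).le)
  · have : -(m * u ^ 2) / (v + w * u) ≤ -(m * u) / (2 * w) := by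
      rw [neg_div, neg_div, neg_le_neg_iff, div_le_div_iff₀ (by positivity) (by positivity)]
      nlinarith [mul_nonneg (mul_nonneg hm hu) (sub_nonneg.2 hvu)]
    exact (exp_le_exp.2 this).trans (le_add_of_nonneg_left (exp_pos _).le)

theorem le_max_four_mul_sq_sub_zero_iff {t V y : ℝ} (ht : 0 < t) :
    t ≤ max (4 * y ^ 2 - V) 0 ↔ √(V + t) / 2 ≤ |y| := by
  rw [le_max_iff, or_iff_left ht.not_ge, div_le_iff₀ two_pos, mul_comm, sqrt_le_iff, mul_pow,
    sq_abs]
  constructor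
  · intro h; exact ⟨by positivity, by linarith⟩
  · rintro ⟨-, h⟩; linarith

theorem integrableOn_exp_neg_mul_add_Ioi {a : ℝ} (ha : 0 < a) (V : ℝ) :
    IntegrableOn (fun t => exp (-a * (V + t))) (Ioi 0) := by
  simp_rw [mul_add, exp_add]
  exact (integrableOn_exp_mul_Ioi (neg_lt_zero.2 ha) 0).const_mul _

theorem integral_exp_neg_mul_add_Ioi {a : ℝ} (ha : 0 < a) (V : ℝ) :
    ∫ t in Ioi 0, exp (-a * (V + t)) = exp (-a * V) / a := by
  simp_rw [mul_add, exp_add]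
  rw [integral_const_mul, integral_exp_mul_Ioi (neg_lt_zero.2 ha)]
  field_simp
  simp

section SqrtExp

variable {b V : ℝ}

noncomputable def sqrtExpPrimitive (b V t : ℝ) : ℝ :=
  -(2 / b) * ((√(V + t) + 1 / b) * exp (-b * √(V + t)))

theorem continuous_sqrtExpPrimitive : Continuous (sqrtExpPrimitive b V) := by
  unfold sqrtExpPrimitive; fun_prop

theorem hasDerivAt_sqrtExpPrimitive (hb : 0 < b) {t : ℝ} (ht : 0 < V + t) :
    HasDerivAt (sqrtExpPrimitive b V) (exp (-b * √(V + t))) t := by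
  have hs : HasDerivAt (fun t => √(V + t)) (1 / (2 * √(V + t))) t := by
    simpa [Function.comp_def] using (hasDerivAt_sqrt ht.ne').comp t ((hasDerivAt_id t).const_add V)
  have := ((hs.add_const (1 / b)).mul (hs.const_mul (-b)).exp).const_mul (-(2 / b))
  refine this.congr_deriv ?_
  have : √(V + t) ≠ 0 := (sqrt_pos.2 ht).ne'
  field_simp
  ring

theorem tendsto_add_mul_exp_neg_mul_atTop (hb : 0 < b) (c : ℝ) :
    Tendsto (fun s => (s + c) * exp (-b * s)) atTop (𝓝 0) := by
  have h1 : Tendsto (fun s => s * exp (-b * s)) atTop (𝓝 0) := by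
    simpa using tendsto_rpow_mul_exp_neg_mul_atTop_nhds_zero 1 b hb
  have h2 : Tendsto (fun s => exp (-b * s)) atTop (𝓝 0) := by
    simpa [Function.comp_def, neg_mul] using
      tendsto_exp_neg_atTop_nhds_zero.comp (tendsto_id.const_mul_atTop hb)
  simpa [add_mul] using h1.add (h2.const_mul c)

theorem tendsto_sqrtExpPrimitive_atTop (hb : 0 < b) :
    Tendsto (sqrtExpPrimitive b V) atTop (𝓝 0) := by
  have hs : Tendsto (fun t => √(V + t)) atTop atTop :=
    tendsto_sqrt_atTop.comp (tendsto_atTop_add_const_left _ V tendsto_id)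
  unfold sqrtExpPrimitive
  simpa using ((tendsto_add_mul_exp_neg_mul_atTop hb (1 / b)).comp hs).const_mul (-(2 / b))

theorem integrableOn_exp_neg_mul_sqrt_add_Ioi (hb : 0 < b) (hV : 0 ≤ V) :
    IntegrableOn (fun t => exp (-b * √(V + t))) (Ioi 0) :=
  integrableOn_Ioi_deriv_of_nonneg continuous_sqrtExpPrimitive.continuousWithinAt
    (fun _ ht => hasDerivAt_sqrtExpPrimitive hb (add_pos_of_nonneg_of_pos hV ht))
    (fun _ _ => (exp_pos _).le) (tendsto_sqrtExpPrimitive_atTop hb)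

theorem integral_exp_neg_mul_sqrt_add_Ioi (hb : 0 < b) (hV : 0 ≤ V) :
    ∫ t in Ioi 0, exp (-b * √(V + t)) = 2 / b * (√V + 1 / b) * exp (-b * √V) := by
  rw [integral_Ioi_of_hasDerivAt_of_nonneg continuous_sqrtExpPrimitive.continuousWithinAt
    (fun _ ht => hasDerivAt_sqrtExpPrimitive hb (add_pos_of_nonneg_of_pos hV ht))
    (fun _ _ => (exp_pos _).le) (tendsto_sqrtExpPrimitive_atTop hb), sqrtExpPrimitive, add_zero]
  ring

end SqrtExp

theorem lintegral_ofReal_le_of_meas_le {α : Type*} [MeasurableSpace α] {μ : Measure α}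
    {f : α → ℝ} {g : ℝ → ℝ} (hf₀ : 0 ≤ᵐ[μ] f) (hf : AEMeasurable f μ)
    (hg : IntegrableOn g (Ioi 0)) (hg₀ : ∀ t ∈ Ioi (0 : ℝ), 0 ≤ g t)
    (h : ∀ t ∈ Ioi (0 : ℝ), μ {x | t ≤ f x} ≤ ENNReal.ofReal (g t)) :
    ∫⁻ x, ENNReal.ofReal (f x) ∂μ ≤ ENNReal.ofReal (∫ t in Ioi 0, g t) := by
  rw [lintegral_eq_lintegral_meas_le μ hf₀ hf,
    ofReal_integral_eq_lintegral_ofReal hg (ae_restrict_of_forall_mem measurableSet_Ioi hg₀)]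
  exact lintegral_mono_ae (ae_restrict_of_forall_mem measurableSet_Ioi h)

theorem meas_le_max_four_mul_sq_sub_le {Ω : Type*} [MeasurableSpace Ω] {P : Measure Ω}
    {Y : Ω → ℝ} {κ m v w V t : ℝ} (hκ : 0 ≤ κ) (hm : 0 ≤ m) (hv : 0 < v) (hw : 0 < w)
    (htail : ∀ u : ℝ, 0 ≤ u →
      P {ω | u ≤ |Y ω|} ≤ ENNReal.ofReal (κ * exp (-(m * u ^ 2) / (v + w * u))))
    (hV : 0 ≤ V) (ht : 0 < t) :
    P {ω | t ≤ max (4 * Y ω ^ 2 - V) 0} ≤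
      ENNReal.ofReal
        (κ * (exp (-(m / (8 * v)) * (V + t)) + exp (-(m / (4 * w)) * √(V + t)))) := by
  simp_rw [le_max_four_mul_sq_sub_zero_iff ht]
  refine (htail _ (by positivity)).trans (ENNReal.ofReal_le_ofReal ?_)
  refine mul_le_mul_of_nonneg_left ?_ hκ
  have e₁ : -(m * (√(V + t) / 2) ^ 2) / (2 * v) = -(m / (8 * v)) * (V + t) := by
    rw [div_pow, sq_sqrt (by linarith)]; ring
  have e₂ : -(m * (√(V + t) / 2)) / (2 * w) = -(m / (4 * w)) * √(V + t) := by ring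
  rw [← e₁, ← e₂]
  exact exp_neg_sq_div_le_add hm hv hw (by positivity)

theorem excess_moment_from_bernstein_tail_general {Ω : Type*} [MeasurableSpace Ω]
    (P : Measure Ω) (Y : Ω → ℝ) (hY : Measurable Y)
    (κ m v w : ℝ) (hκ : 0 < κ) (hm : 0 < m) (hv : 0 < v) (hw : 0 < w)
    (htail : ∀ u : ℝ, 0 ≤ u →
      P {ω | u ≤ |Y ω|} ≤ ENNReal.ofReal (κ * Real.exp (-(m * u ^ 2) / (v + w * u))))
    (V : ℝ) (hV : 0 ≤ V) :
    ∫⁻ ω, ENNReal.ofReal (max (4 * Y ω ^ 2 - V) 0) ∂P ≤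
      ENNReal.ofReal (κ *
        (8 * v / m * Real.exp (-(m * V) / (8 * v)) +
          8 * w / m * (Real.sqrt V + 4 * w / m) *
            Real.exp (-(m * Real.sqrt V) / (4 * w)))) := by
  have ha : 0 < m / (8 * v) := by positivity
  have hb : 0 < m / (4 * w) := by positivity
  have hint₁ := integrableOn_exp_neg_mul_add_Ioi ha V
  have hint₂ := integrableOn_exp_neg_mul_sqrt_add_Ioi hb hV
  calc ∫⁻ ω, ENNReal.ofReal (max (4 * Y ω ^ 2 - V) 0) ∂P
      ≤ ENNReal.ofReal (∫ t in Ioi 0,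
          κ * (exp (-(m / (8 * v)) * (V + t)) + exp (-(m / (4 * w)) * √(V + t)))) :=
        lintegral_ofReal_le_of_meas_le (ae_of_all _ fun _ => le_max_right _ _)
          (by fun_prop) ((hint₁.add hint₂).const_mul κ) (fun _ _ => by positivity)
          (fun _ ht => meas_le_max_four_mul_sq_sub_le hκ.le hm.le hv hw htail hV ht)
    _ = _ := by
        rw [integral_const_mul, integral_add hint₁ hint₂, integral_exp_neg_mul_add_Ioi ha,
          integral_exp_neg_mul_sqrt_add_Ioi hb hV]
        congr 2
        field_simp
        ring

/-- Expected excess over the variance threshold from a Bernstein-type tail: if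
`P(|Y| ≥ u) ≤ κ exp(-m u² / (v + w u))` for every `u ≥ 0` and `V ≥ 0`, then
`E[{4Y² - V}_+] ≤ κ [(8v/m) exp(-mV/(8v)) + (8w/m)(√V + 4w/m) exp(-m√V/(4w))]`. -/
theorem excess_moment_from_bernstein_tail {Ω : Type*} [MeasurableSpace Ω]
    (P : Measure Ω) [IsProbabilityMeasure P] (Y : Ω → ℝ) (hY : Measurable Y)
    (κ m v w : ℝ) (hκ : 0 < κ) (hm : 0 < m) (hv : 0 < v) (hw : 0 < w)
    (htail : ∀ u : ℝ, 0 ≤ u →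
      P {ω | u ≤ |Y ω|} ≤ ENNReal.ofReal (κ * Real.exp (-(m * u ^ 2) / (v + w * u))))
    (V : ℝ) (hV : 0 ≤ V) :
    ∫⁻ ω, ENNReal.ofReal (max (4 * Y ω ^ 2 - V) 0) ∂P ≤
      ENNReal.ofReal (κ *
        (8 * v / m * Real.exp (-(m * V) / (8 * v)) +
          8 * w / m * (Real.sqrt V + 4 * w / m) *
            Real.exp (-(m * Real.sqrt V) / (4 * w)))) :=
  excess_moment_from_bernstein_tail_general P Y hY κ m v w hκ hm hv hw htail V hV
end

section
/- Let (Ω, F) be a measurable space, K ≥ 1 an integer, F_0 ⊆ F_1 ⊆ … ⊆ F_K ⊆ F an increasing family of sub-σ-algebras, and let Q and P be probability measures on (Ω, F) with P ≪ Q, density D = dP/dQ with D > 0 Q-almost everywhere. Set D_j = E_Q[D | F_j] and assume D_0 = 1 Q-almost everywhere (i.e. P = Q on F_0). Assume there is a constant C ≥ 1 and, for every j ∈ {1, …, K}, nonnegative measurable functions S_j, U_j with D_j² ≤ S_j · U_j · D_{j-1}² Q-almost everywhere, E_Q[S_j] ≤ 1 and E_Q[U_j²] ≤ C. Then for every A ∈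 F_K: P(A) ≤ C^{K(K+1)/8} · Q(A)^{1/4^K}. -/
/-!
Write `D_j = E_Q[D | F_j]`. By induction on `j`, `D_j` obeys the `DeviationBound`
`E_Q[D_j φ] ≤ C^(a_j) E_Q[φ]^(4^(-j))` for every measurable `φ` with values in `[0, 1]`, where `a_j = ∑_{i<j} 4^(-(i+1))`. For the step, `D_{j+1} φ`
is bounded both by `D_{j+1}` and, through the factorisation, by `D_j √(S U) φ`; conditioning on
`F_j` gives `E[D_{j+1} φ] ≤ E[D_j ψ]` with `ψ = min(1, E[√(S U) φ | F_j])`, and two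
Cauchy–Schwarz inequalities give `E[ψ] ≤ C^(1/4) E[φ]^(1/4)`. Take `φ = 1_A` and `j = K`;
finally `a_K ≤ K/4 ≤ K(K+1)/8`.

Everything is carried out for `ℝ≥0∞`-valued functions with the Lebesgue conditional
expectation `μ⁻[·|m]`, so that no integrability conditions arise along the way.
-/

open MeasureTheory Set
open scoped ENNReal

theorem ENNReal.sq_rpow_one_div_two (x : ℝ≥0∞) : (x ^ 2) ^ (1 / 2 : ℝ) = x := by
  simpa [one_div] using ENNReal.pow_rpow_inv_natCast two_ne_zero x

theorem ENNReal.ofReal_sq_le_mul_mul_sq {a b s u : ℝ} (ha : 0 ≤ a) (hb : 0 ≤ b) (hs : 0 ≤ s)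
    (hu : 0 ≤ u) (h : a ^ 2 ≤ s * u * b ^ 2) :
    ENNReal.ofReal a ^ 2 ≤ ENNReal.ofReal s * ENNReal.ofReal u * ENNReal.ofReal b ^ 2 := by
  rw [← ENNReal.ofReal_pow ha, ← ENNReal.ofReal_pow hb, ← ENNReal.ofReal_mul hs,
    ← ENNReal.ofReal_mul (mul_nonneg hs hu)]
  exact ENNReal.ofReal_le_ofReal h

theorem sum_range_one_div_four_pow_le (K : ℕ) :
    ∑ i ∈ Finset.range K, (1 / 4 : ℝ) ^ (i + 1) ≤ K * (K + 1) / 8 := by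
  have hK : (K : ℝ) ≤ K ^ 2 := by exact_mod_cast Nat.le_self_pow two_ne_zero K
  calc ∑ i ∈ Finset.range K, (1 / 4 : ℝ) ^ (i + 1) ≤ ∑ _i ∈ Finset.range K, (1 / 4 : ℝ) :=
        Finset.sum_le_sum fun i _ => pow_le_of_le_one (by norm_num) (by norm_num) (by omega)
    _ ≤ K * (K + 1) / 8 := by
        rw [Finset.sum_const, Finset.card_range, nsmul_eq_mul]
        linarith

section ConditionalLExpectation

variable {Ω : Type*} {m m₀ : MeasurableSpace Ω} {μ : Measure[m₀] Ω}

theorem lintegral_mul_condLExp (hm : m ≤ m₀) [SigmaFinite (μ.trim hm)] {f X : Ω → ℝ≥0∞}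
    (hf : Measurable[m] f) (hX : AEMeasurable X μ) :
    ∫⁻ ω, f ω * μ⁻[X|m] ω ∂μ = ∫⁻ ω, f ω * X ω ∂μ := by
  have h_trim : ∀ Y : Ω → ℝ≥0∞, AEMeasurable Y μ →
      ∫⁻ ω, f ω * Y ω ∂μ = ∫⁻ ω, f ω ∂(μ.withDensity Y).trim hm := fun Y hY => by
    rw [lintegral_trim hm hf,
      lintegral_withDensity_eq_lintegral_mul₀ hY (hf.mono hm le_rfl).aemeasurable]
    simp_rw [Pi.mul_apply, mul_comm]
  rw [h_trim _ ((measurable_condLExp m μ X).mono hm le_rfl).aemeasurable, h_trim X hX]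
  congr 1
  refine @Measure.ext _ m _ _ fun s hs => ?_
  rw [trim_measurableSet_eq hm hs, trim_measurableSet_eq hm hs, withDensity_apply _ (hm s hs),
    withDensity_apply _ (hm s hs), setLIntegral_condLExp hm μ X hs]

theorem lintegral_le_lintegral_mul_min_condLExp (hm : m ≤ m₀) [SigmaFinite (μ.trim hm)]
    {f v w G : Ω → ℝ≥0∞} (hv : AEMeasurable v μ) (hG : AEMeasurable G μ) (hw : Measurable[m] w)
    (hvw : μ⁻[v|m] =ᵐ[μ] w) (hfv : f ≤ᵐ[μ] v) (hfG : f ≤ᵐ[μ] w * G) :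
    ∫⁻ ω, f ω ∂μ ≤ ∫⁻ ω, w ω * min 1 (μ⁻[G|m] ω) ∂μ := by
  set ξ := μ⁻[G|m]
  set B := {ω | ξ ω ≤ 1}
  have hB : MeasurableSet[m] B := measurableSet_le (measurable_condLExp m μ G) measurable_const
  have h_compl : ∫⁻ ω, Bᶜ.indicator v ω ∂μ = ∫⁻ ω, Bᶜ.indicator w ω ∂μ := by
    rw [lintegral_indicator (hm _ hB.compl), lintegral_indicator (hm _ hB.compl),
      ← setLIntegral_condLExp hm μ v hB.compl]
    exact setLIntegral_congr_fun_ae (hm _ hB.compl) (hvw.mono fun _ hω _ => hω)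
  have h_B : ∫⁻ ω, B.indicator w ω * G ω ∂μ = ∫⁻ ω, B.indicator w ω * ξ ω ∂μ :=
    (lintegral_mul_condLExp hm (hw.indicator hB) hG).symm
  calc ∫⁻ ω, f ω ∂μ ≤ ∫⁻ ω, Bᶜ.indicator v ω + B.indicator w ω * G ω ∂μ := by
        refine lintegral_mono_ae ?_
        filter_upwards [hfv, hfG] with ω hωv hωG
        by_cases hω : ω ∈ B
        · simpa [hω] using hωG
        · simpa [hω] using hωv
    _ = ∫⁻ ω, Bᶜ.indicator w ω + B.indicator w ω * ξ ω ∂μ := by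
        rw [lintegral_add_left' (hv.indicator (hm _ hB.compl)), h_compl, h_B,
          lintegral_add_left ((hw.mono hm le_rfl).indicator (hm _ hB.compl))]
    _ = ∫⁻ ω, w ω * min 1 (ξ ω) ∂μ := by
        refine lintegral_congr fun ω => ?_
        by_cases hω : ω ∈ B
        · simp [hω, min_eq_right (show ξ ω ≤ 1 from hω)]
        · simp [hω, min_eq_left (not_le.mp (show ¬ξ ω ≤ 1 from hω)).le]

theorem integrable_of_condExp_ae_eq_const [NeZero μ] {f : Ω → ℝ} {c : ℝ} (hc : c ≠ 0)
    (h : μ[f|m] =ᵐ[μ] fun _ => c) : Integrable f μ := by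
  by_contra hf
  rw [condExp_of_not_integrable hf] at h
  obtain ⟨_, hω⟩ := h.exists
  exact hc hω.symm

theorem condLExp_ofReal_condExp {m' : MeasurableSpace Ω} (hmm' : m ≤ m') (hm' : m' ≤ m₀)
    [SigmaFinite (μ.trim hm')] {f : Ω → ℝ} (hf0 : 0 ≤ᵐ[μ] f) :
    μ⁻[fun ω => ENNReal.ofReal (μ[f|m'] ω)|m] =ᵐ[μ] fun ω => ENNReal.ofReal (μ[f|m] ω) :=
  (condLExp_ofReal m integrable_condExp (condExp_nonneg hf0)).trans
    ((condExp_condExp_of_le hmm' hm').fun_comp ENNReal.ofReal)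

theorem withDensity_ofReal_apply_eq_lintegral_condExp_mul_indicator (hm : m ≤ m₀)
    [SigmaFinite (μ.trim hm)] {f : Ω → ℝ} (hf : Integrable f μ) (hf0 : 0 ≤ᵐ[μ] f) {A : Set Ω}
    (hA : MeasurableSet[m] A) :
    μ.withDensity (fun ω => ENNReal.ofReal (f ω)) A =
      ∫⁻ ω, ENNReal.ofReal (μ[f|m] ω) * A.indicator 1 ω ∂μ := by
  rw [withDensity_apply _ (hm A hA), ← setLIntegral_condLExp hm μ _ hA,
    setLIntegral_congr_fun_ae (hm A hA) ((condLExp_ofReal m hf hf0).mono fun _ hω _ => hω),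
    ← lintegral_indicator (hm A hA)]
  congr 1 with ω
  by_cases hω : ω ∈ A <;> simp [hω]

end ConditionalLExpectation

section CauchySchwarz

variable {Ω : Type*} {m₀ : MeasurableSpace Ω} {μ : Measure Ω}

theorem lintegral_rpow_half_mul_le {f g : Ω → ℝ≥0∞} (hf : AEMeasurable f μ)
    (hg : AEMeasurable g μ) :
    ∫⁻ ω, (f ω * g ω) ^ (1 / 2 : ℝ) ∂μ ≤
      (∫⁻ ω, f ω ∂μ) ^ (1 / 2 : ℝ) * (∫⁻ ω, g ω ∂μ) ^ (1 / 2 : ℝ) := by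
  have h_sq : ∀ x : ℝ≥0∞, (x ^ (1 / 2 : ℝ)) ^ (2 : ℝ) = x := fun x => by
    rw [← ENNReal.rpow_mul]; norm_num
  have h := ENNReal.lintegral_mul_le_Lp_mul_Lq μ Real.HolderConjugate.two_two
    (hf.pow_const (1 / 2 : ℝ)) (hg.pow_const (1 / 2 : ℝ))
  simp only [Pi.mul_apply, h_sq] at h
  simpa only [ENNReal.mul_rpow_of_nonneg _ _ (by norm_num : (0 : ℝ) ≤ 1 / 2)] using h

theorem lintegral_rpow_half_mul_mul_le {σ υ φ : Ω → ℝ≥0∞} {c : ℝ≥0∞}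
    (hσ : AEMeasurable σ μ) (hυ : AEMeasurable υ μ) (hφ : AEMeasurable φ μ) (hφ1 : φ ≤ 1)
    (hσ1 : ∫⁻ ω, σ ω ∂μ ≤ 1) (hυc : ∫⁻ ω, υ ω ^ 2 ∂μ ≤ c) :
    ∫⁻ ω, (σ ω * υ ω) ^ (1 / 2 : ℝ) * φ ω ∂μ ≤
      c ^ (1 / 4 : ℝ) * (∫⁻ ω, φ ω ∂μ) ^ (1 / 4 : ℝ) := by
  have hυφ : ∫⁻ ω, υ ω * φ ω ∂μ ≤ c ^ (1 / 2 : ℝ) * (∫⁻ ω, φ ω ∂μ) ^ (1 / 2 : ℝ) := calc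
    ∫⁻ ω, υ ω * φ ω ∂μ = ∫⁻ ω, (υ ω ^ 2 * φ ω ^ 2) ^ (1 / 2 : ℝ) ∂μ := by
        simp_rw [← mul_pow, ENNReal.sq_rpow_one_div_two]
    _ ≤ (∫⁻ ω, υ ω ^ 2 ∂μ) ^ (1 / 2 : ℝ) * (∫⁻ ω, φ ω ^ 2 ∂μ) ^ (1 / 2 : ℝ) :=
        lintegral_rpow_half_mul_le (hυ.pow_const 2) (hφ.pow_const 2)
    _ ≤ c ^ (1 / 2 : ℝ) * (∫⁻ ω, φ ω ∂μ) ^ (1 / 2 : ℝ) := by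
        gcongr with ω
        exact pow_le_of_le_one zero_le (hφ1 ω) two_ne_zero
  calc ∫⁻ ω, (σ ω * υ ω) ^ (1 / 2 : ℝ) * φ ω ∂μ
      = ∫⁻ ω, (σ ω * φ ω * (υ ω * φ ω)) ^ (1 / 2 : ℝ) ∂μ := by
        refine lintegral_congr fun ω => ?_
        rw [show σ ω * φ ω * (υ ω * φ ω) = σ ω * υ ω * φ ω ^ 2 by ring,
          ENNReal.mul_rpow_of_nonneg (σ ω * υ ω) _ (by norm_num), ENNReal.sq_rpow_one_div_two]
    _ ≤ (∫⁻ ω, σ ω * φ ω ∂μ) ^ (1 / 2 : ℝ) * (∫⁻ ω, υ ω * φ ω ∂μ) ^ (1 / 2 : ℝ) :=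
        lintegral_rpow_half_mul_le (hσ.mul hφ) (hυ.mul hφ)
    _ ≤ 1 ^ (1 / 2 : ℝ) * (c ^ (1 / 2 : ℝ) * (∫⁻ ω, φ ω ∂μ) ^ (1 / 2 : ℝ)) ^ (1 / 2 : ℝ) := by
        gcongr
        calc ∫⁻ ω, σ ω * φ ω ∂μ ≤ ∫⁻ ω, σ ω ∂μ :=
              lintegral_mono fun ω => mul_le_of_le_one_right zero_le (hφ1 ω)
          _ ≤ 1 := hσ1
    _ = c ^ (1 / 4 : ℝ) * (∫⁻ ω, φ ω ∂μ) ^ (1 / 4 : ℝ) := by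
        rw [ENNReal.one_rpow, one_mul, ENNReal.mul_rpow_of_nonneg _ _ (by norm_num),
          ← ENNReal.rpow_mul, ← ENNReal.rpow_mul]
        norm_num

end CauchySchwarz

section DeviationBound

variable {Ω : Type*} {m₀ : MeasurableSpace Ω}

def DeviationBound (μ : Measure Ω) (Z : Ω → ℝ≥0∞) (N : ℝ≥0∞) (α : ℝ) : Prop :=
  ∀ φ : Ω → ℝ≥0∞, Measurable φ → φ ≤ 1 → ∫⁻ ω, Z ω * φ ω ∂μ ≤ N * (∫⁻ ω, φ ω ∂μ) ^ α

variable {μ : Measure Ω}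

theorem DeviationBound.of_ae_eq_one {Z : Ω → ℝ≥0∞} (hZ : Z =ᵐ[μ] 1) : DeviationBound μ Z 1 1 :=
  fun φ _ _ => by
    rw [lintegral_congr_ae (hZ.mono fun ω h => show Z ω * φ ω = φ ω by simp [h])]
    simp

theorem DeviationBound.of_condLExp {m : MeasurableSpace Ω} (hm : m ≤ m₀)
    [SigmaFinite (μ.trim hm)] {v w σ υ : Ω → ℝ≥0∞} {N c : ℝ≥0∞} {α : ℝ} (hα : 0 ≤ α)
    (hw : DeviationBound μ w N α) (hwm : Measurable[m] w) (hv : AEMeasurable v μ)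
    (hσ : AEMeasurable σ μ) (hυ : AEMeasurable υ μ) (hvw : μ⁻[v|m] =ᵐ[μ] w)
    (hfact : ∀ᵐ ω ∂μ, v ω ^ 2 ≤ σ ω * υ ω * w ω ^ 2)
    (hσ1 : ∫⁻ ω, σ ω ∂μ ≤ 1) (hυc : ∫⁻ ω, υ ω ^ 2 ∂μ ≤ c) :
    DeviationBound μ v (N * c ^ (α / 4)) (α / 4) := by
  intro φ hφ hφ1
  set G := fun ω => (σ ω * υ ω) ^ (1 / 2 : ℝ) * φ ω
  have hG : AEMeasurable G μ := ((hσ.mul hυ).pow_const _).mul hφ.aemeasurable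
  have hvG : ∀ᵐ ω ∂μ, v ω * φ ω ≤ w ω * G ω := by
    filter_upwards [hfact] with ω hω
    have hv_le : v ω ≤ (σ ω * υ ω) ^ (1 / 2 : ℝ) * w ω := by
      rw [← ENNReal.sq_rpow_one_div_two (v ω), ← ENNReal.sq_rpow_one_div_two (w ω),
        ← ENNReal.mul_rpow_of_nonneg _ _ (by norm_num)]
      gcongr
    calc v ω * φ ω ≤ (σ ω * υ ω) ^ (1 / 2 : ℝ) * w ω * φ ω := by gcongr
      _ = w ω * G ω := by ring
  calc ∫⁻ ω, v ω * φ ω ∂μ ≤ ∫⁻ ω, w ω * min 1 (μ⁻[G|m] ω) ∂μ :=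
        lintegral_le_lintegral_mul_min_condLExp hm hv hG hwm hvw
          (ae_of_all _ fun ω => mul_le_of_le_one_right zero_le (hφ1 ω)) hvG
    _ ≤ N * (∫⁻ ω, min 1 (μ⁻[G|m] ω) ∂μ) ^ α :=
        hw _ (measurable_const.min ((measurable_condLExp m μ G).mono hm le_rfl))
          fun ω => min_le_left _ _
    _ ≤ N * (∫⁻ ω, G ω ∂μ) ^ α := by
        rw [← lintegral_condLExp hm μ G]
        gcongr with ω
        exact min_le_right _ _
    _ ≤ N * (c ^ (1 / 4 : ℝ) * (∫⁻ ω, φ ω ∂μ) ^ (1 / 4 : ℝ)) ^ α := by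
        gcongr
        exact lintegral_rpow_half_mul_mul_le hσ hυ hφ.aemeasurable hφ1 hσ1 hυc
    _ = N * c ^ (α / 4) * (∫⁻ ω, φ ω ∂μ) ^ (α / 4) := by
        rw [ENNReal.mul_rpow_of_nonneg _ _ hα, ← ENNReal.rpow_mul, ← ENNReal.rpow_mul, mul_assoc]
        ring_nf

theorem DeviationBound.iterate [IsFiniteMeasure μ] {F : ℕ → MeasurableSpace Ω} {K : ℕ}
    (hFle : ∀ j ≤ K, F j ≤ m₀)
    {Z σ υ : ℕ → Ω → ℝ≥0∞} {c : ℝ≥0∞} (hZ : ∀ j ≤ K, Measurable[F j] (Z j))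
    (hσ : ∀ j < K, AEMeasurable (σ (j + 1)) μ) (hυ : ∀ j < K, AEMeasurable (υ (j + 1)) μ)
    (hcond : ∀ j < K, μ⁻[Z (j + 1)|F j] =ᵐ[μ] Z j)
    (hfact : ∀ j < K, ∀ᵐ ω ∂μ, Z (j + 1) ω ^ 2 ≤ σ (j + 1) ω * υ (j + 1) ω * Z j ω ^ 2)
    (hσ1 : ∀ j < K, ∫⁻ ω, σ (j + 1) ω ∂μ ≤ 1) (hυc : ∀ j < K, ∫⁻ ω, υ (j + 1) ω ^ 2 ∂μ ≤ c)
    (h0 : DeviationBound μ (Z 0) 1 1) :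
    ∀ j ≤ K, DeviationBound μ (Z j) (c ^ ∑ i ∈ Finset.range j, (1 / 4 : ℝ) ^ (i + 1))
      ((1 / 4 : ℝ) ^ j) := by
  intro j
  induction j with
  | zero => simpa using h0
  | succ j ih =>
    intro hj
    have hstep := (ih (by omega)).of_condLExp (hFle j (by omega)) (by positivity)
      (hZ j (by omega)) ((hZ (j + 1) hj).mono (hFle _ hj) le_rfl).aemeasurable
      (hσ j hj) (hυ j hj) (hcond j hj) (hfact j hj) (hσ1 j hj) (hυc j hj)
    rwa [Finset.sum_range_succ, ENNReal.rpow_add_of_nonneg _ _ (by positivity) (by positivity),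
      show (1 / 4 : ℝ) ^ (j + 1) = (1 / 4) ^ j / 4 by ring]

end DeviationBound

theorem change_of_measure_iterated_general {Ω : Type*} {mΩ : MeasurableSpace Ω}
    (K : ℕ)
    (F : ℕ → MeasurableSpace Ω)
    (hFmono : ∀ j, j < K → F j ≤ F (j + 1))
    (hFle : ∀ j, j ≤ K → F j ≤ mΩ)
    (Q P : Measure Ω) [IsProbabilityMeasure Q]
    (D : Ω → ℝ) (hDpos : ∀ᵐ ω ∂Q, 0 < D ω)
    (hP : P = Q.withDensity fun ω => ENNReal.ofReal (D ω))
    (hD0 : Q[D|F 0] =ᵐ[Q] fun _ => 1)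
    (C : ℝ) (hC : 1 ≤ C)
    (S U : ℕ → Ω → ℝ)
    (hSmeas : ∀ j, Measurable (S j)) (hUmeas : ∀ j, Measurable (U j))
    (hSnonneg : ∀ j ω, 0 ≤ S j ω) (hUnonneg : ∀ j ω, 0 ≤ U j ω)
    (hfact : ∀ j, 1 ≤ j → j ≤ K →
      ∀ᵐ ω ∂Q, (Q[D|F j]) ω ^ 2 ≤ S j ω * U j ω * (Q[D|F (j - 1)]) ω ^ 2)
    (hSint : ∀ j, 1 ≤ j → j ≤ K → ∫⁻ ω, ENNReal.ofReal (S j ω) ∂Q ≤ 1)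
    (hUint : ∀ j, 1 ≤ j → j ≤ K →
      ∫⁻ ω, ENNReal.ofReal (U j ω ^ 2) ∂Q ≤ ENNReal.ofReal C)
    (A : Set Ω) (hA : MeasurableSet[F K] A) :
    P A ≤ ENNReal.ofReal (C ^ ((K : ℝ) * ((K : ℝ) + 1) / 8)) *
      Q A ^ ((1 : ℝ) / 4 ^ K) := by
  have hDint : Integrable D Q := integrable_of_condExp_ae_eq_const one_ne_zero hD0
  have hD_nonneg : 0 ≤ᵐ[Q] D := hDpos.mono fun _ h => h.le
  have hbound := DeviationBound.iterate (μ := Q) (Z := fun j ω => ENNReal.ofReal (Q[D|F j] ω))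
    (σ := fun j ω => ENNReal.ofReal (S j ω)) (υ := fun j ω => ENNReal.ofReal (U j ω)) hFle (fun _ _ => stronglyMeasurable_condExp.measurable.ennreal_ofReal)
    (fun j _ => (hSmeas _).ennreal_ofReal.aemeasurable)
    (fun j _ => (hUmeas _).ennreal_ofReal.aemeasurable)
    (fun j hj => condLExp_ofReal_condExp (hFmono j hj) (hFle _ hj) hD_nonneg)
    (fun j hj => by
      filter_upwards [hfact (j + 1) (by omega) hj, condExp_nonneg (m := F (j + 1)) hD_nonneg,
        condExp_nonneg (m := F j) hD_nonneg] with ω hω h1 h2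
      exact ENNReal.ofReal_sq_le_mul_mul_sq h1 h2 (hSnonneg _ ω) (hUnonneg _ ω)
        (by simpa using hω))
    (fun j hj => hSint (j + 1) (by omega) hj)
    (fun j hj => by
      simpa only [← ENNReal.ofReal_pow (hUnonneg _ _)] using hUint (j + 1) (by omega) hj)
    (DeviationBound.of_ae_eq_one (hD0.mono fun ω h => by simp [h]))
    K le_rfl (A.indicator 1) (measurable_one.indicator (hFle K le_rfl A hA))
    (indicator_le_self' fun _ _ => zero_le)
  rw [hP, withDensity_ofReal_apply_eq_lintegral_condExp_mul_indicator (hFle K le_rfl) hDint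
    hD_nonneg hA]
  refine hbound.trans ?_
  rw [lintegral_indicator_one (hFle K le_rfl A hA), one_div_pow,
    ← ENNReal.ofReal_rpow_of_pos (by linarith)]
  gcongr ?_ * _
  exact ENNReal.rpow_le_rpow_of_exponent_le (ENNReal.one_le_ofReal.mpr hC)
    (sum_range_one_div_four_pow_le K)

/-- Iterated change-of-measure deviation transfer: with `P = D · Q`, `D > 0` a.e.,
`P = Q` on `F 0`, and factorizations `D_j² ≤ S_j U_j D_{j-1}²` with `E_Q[S_j] ≤ 1`
and `E_Q[U_j²] ≤ C` along the filtration `F 0 ⊆ … ⊆ F K`, every `F K`-measurable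
event `A` satisfies `P(A) ≤ C^(K(K+1)/8) Q(A)^(1/4^K)`. -/
theorem change_of_measure_iterated {Ω : Type*} {mΩ : MeasurableSpace Ω}
    (K : ℕ) (hK : 1 ≤ K)
    (F : ℕ → MeasurableSpace Ω)
    (hFmono : ∀ j, j < K → F j ≤ F (j + 1))
    (hFle : ∀ j, j ≤ K → F j ≤ mΩ)
    (Q P : Measure Ω) [IsProbabilityMeasure Q] [IsProbabilityMeasure P]
    (D : Ω → ℝ) (hD : Measurable D) (hDpos : ∀ᵐ ω ∂Q, 0 < D ω)
    (hP : P = Q.withDensity fun ω => ENNReal.ofReal (D ω))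
    (hD0 : Q[D|F 0] =ᵐ[Q] fun _ => 1)
    (C : ℝ) (hC : 1 ≤ C)
    (S U : ℕ → Ω → ℝ)
    (hSmeas : ∀ j, Measurable (S j)) (hUmeas : ∀ j, Measurable (U j))
    (hSnonneg : ∀ j ω, 0 ≤ S j ω) (hUnonneg : ∀ j ω, 0 ≤ U j ω)
    (hfact : ∀ j, 1 ≤ j → j ≤ K →
      ∀ᵐ ω ∂Q, (Q[D|F j]) ω ^ 2 ≤ S j ω * U j ω * (Q[D|F (j - 1)]) ω ^ 2)
    (hSint : ∀ j, 1 ≤ j → j ≤ K → ∫⁻ ω, ENNReal.ofReal (S j ω) ∂Q ≤ 1)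
    (hUint : ∀ j, 1 ≤ j → j ≤ K →
      ∫⁻ ω, ENNReal.ofReal (U j ω ^ 2) ∂Q ≤ ENNReal.ofReal C)
    (A : Set Ω) (hA : MeasurableSet[F K] A) :
    P A ≤ ENNReal.ofReal (C ^ ((K : ℝ) * ((K : ℝ) + 1) / 8)) *
      Q A ^ ((1 : ℝ) / 4 ^ K) :=
  change_of_measure_iterated_general K F hFmono hFle Q P D hDpos hP hD0 C hC S U hSmeas hUmeas
    hSnonneg hUnonneg hfact hSint hUint A hA
end
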